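/- The polytope Δ_2 in R^4 given as the convex hull of the columns (0,0,1,0), (4,-2,-1,-2), (-2,2,-1,0), (0,0,0,1), (0,1,0,0), (-2,-2,2,1), (1,0,0,0) has exactly one interior lattice point, namely the origin. -/

import Mathlib

/-!
Five facets of `Δ₂` have the form `{x | a ⬝ᵥ x ≤ 1}` with `a` integral, so an interior lattice
point `v` satisfies `a ⬝ᵥ v < 1`, i.e. `a ⬝ᵥ v ≤ 0`, for each of them. Their normals satisfy a
linear relation with positive coefficients and span `ℝ⁴`, which forces `v = 0`.
Conversely, the unit vectors are vertices of `Δ₂` and `Δ₂` contains a point with all coordinates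
negative, so it contains a simplex having the origin in its interior.
-/

open Set Filter Topology Matrix

theorem LinearMap.lt_of_mem_interior_of_forall_le {E : Type*} [AddCommGroup E] [Module ℝ E]
    [TopologicalSpace E] [ContinuousAdd E] [ContinuousSMul ℝ E] (f : E →ₗ[ℝ] ℝ) {w : E}
    (hw : 0 < f w) {C : Set E} {c : ℝ} (hC : ∀ y ∈ C, f y ≤ c) {x : E} (hx : x ∈ interior C) :
    f x < c := by
  have hline : Tendsto (fun t : ℝ => x + t • w) (𝓝[>] 0) (𝓝 x) := by
    have : Continuous fun t : ℝ => x + t • w := by fun_prop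
    simpa using (this.tendsto 0).mono_left nhdsWithin_le_nhds
  obtain ⟨t, htC, ht⟩ :=
    ((hline.eventually (mem_interior_iff_mem_nhds.1 hx)).and self_mem_nhdsWithin).exists
  calc f x < f x + t * f w := lt_add_of_pos_right _ (mul_pos ht hw)
    _ = f (x + t • w) := by simp
    _ ≤ c := hC _ htC

theorem dotProduct_nonpos_of_mem_interior_convexHull {ι : Type*} [Fintype ι]
    {s : Set (ι → ℝ)} {a v : ι → ℤ} (hs : ∀ y ∈ s, (fun i => (a i : ℝ)) ⬝ᵥ y ≤ 1)
    (hv : (fun i => (v i : ℝ)) ∈ interior (convexHull ℝ s)) : a ⬝ᵥ v ≤ 0 := by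
  rcases eq_or_ne a 0 with rfl | ha
  · simp
  set a' : ι → ℝ := fun i => (a i : ℝ)
  have ha' : 0 < a' ⬝ᵥ a' := by
    refine lt_of_le_of_ne (Fintype.sum_nonneg fun i => mul_self_nonneg _) (Ne.symm ?_)
    rw [Ne, dotProduct_self_eq_zero]
    exact fun h => ha (funext fun i => by simpa [a'] using congrFun h i)
  have hhull : ∀ y ∈ convexHull ℝ s, a' ⬝ᵥ y ≤ 1 :=
    convexHull_min hs (convex_halfSpace_le (dotProductBilin ℝ ℝ a').isLinear 1)
  have hlt := (dotProductBilin ℝ ℝ a').lt_of_mem_interior_of_forall_le ha' hhull hv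
  have hcast : ((a ⬝ᵥ v : ℤ) : ℝ) < 1 := by
    simpa [a', dotProduct] using hlt
  exact Int.lt_add_one_iff.1 (by exact_mod_cast hcast)

theorem zero_mem_interior_convexHull_of_forall_neg {ι : Type*} [Fintype ι] [DecidableEq ι]
    {s : Set (ι → ℝ)} (hsingle : ∀ i, Pi.single i 1 ∈ s) {p : ι → ℝ}
    (hp : p ∈ convexHull ℝ s) (hneg : ∀ i, p i < 0) :
    (0 : ι → ℝ) ∈ interior (convexHull ℝ s) := by
  set c := 1 - ∑ i, p i
  have hc : 0 < c := by
    have := Finset.sum_nonpos (s := Finset.univ) fun i _ => (hneg i).le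
    linarith
  -- the weight of `p` when `x` is written as a combination of `p` and the unit vectors
  set ℓ : (ι → ℝ) → ℝ := fun x => (1 - ∑ i, x i) / c
  have hmem : ∀ x : ι → ℝ, 0 < 1 - ∑ i, x i → (∀ i, ℓ x * p i < x i) →
      x ∈ convexHull ℝ s := by
    intro x hx hμ
    have hsum : ℓ x + ∑ i, (x i - ℓ x * p i) = 1 := by
      simp only [Finset.sum_sub_distrib, ← Finset.mul_sum, ℓ]
      field_simp
      ring
    have hcomb := (convex_convexHull ℝ s).sum_mem (t := Finset.univ)
      (w := fun o : Option ι => o.elim (ℓ x) fun i => x i - ℓ x * p i)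
      (z := fun o => o.elim p fun i => Pi.single i 1) ?_ ?_ ?_
    · convert hcomb using 1
      ext j
      simp [Fintype.sum_option, Finset.sum_apply, Pi.single_apply]
    · rintro (_ | i) -
      · exact div_nonneg hx.le hc.le
      · exact sub_nonneg.2 (hμ i).le
    · simpa [Fintype.sum_option] using hsum
    · rintro (_ | i) -
      · exact hp
      · exact subset_convexHull ℝ s (hsingle i)
  have hℓ : Continuous ℓ := by fun_prop
  rw [mem_interior_iff_mem_nhds]
  filter_upwards [(continuousAt_const (x := (0 : ι → ℝ)) (y := (0 : ℝ))).eventually_lt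
      (by fun_prop : Continuous fun x : ι → ℝ => 1 - ∑ i, x i).continuousAt (by simp),
    eventually_all.2 fun i => ((hℓ.mul continuous_const).continuousAt (x := 0)).eventually_lt
      (continuous_apply i).continuousAt
      (by simpa [ℓ] using mul_neg_of_pos_of_neg (inv_pos.2 hc) (hneg i))]
    with x hx hμ using hmem x hx hμ

def delta2Vertices : Set (Fin 4 → ℝ) :=
  {![0,0,1,0], ![4,-2,-1,-2], ![-2,2,-1,0], ![0,0,0,1], ![0,1,0,0], ![-2,-2,2,1], ![1,0,0,0]}

theorem eq_zero_of_mem_interior_delta2 {v : Fin 4 → ℤ}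
    (hv : (fun i => (v i : ℝ)) ∈ interior (convexHull ℝ delta2Vertices)) : v = 0 := by
  -- `2 a₁ + 3 a₂ + 2 a₃ + 3 a₄ + 2 a₅ = 0` for the five normals `aₖ` below
  obtain ⟨h₁, h₂, h₃, h₄, h₅⟩ : ![1, 1, -1, 1] ⬝ᵥ v ≤ 0 ∧ ![1, 0, 1, 1] ⬝ᵥ v ≤ 0 ∧
      ![0, 1, 1, 1] ⬝ᵥ v ≤ 0 ∧ ![-1, 0, 1, -3] ⬝ᵥ v ≤ 0 ∧ ![-1, -2, -3, 1] ⬝ᵥ v ≤ 0 := by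
    refine ⟨?_, ?_, ?_, ?_, ?_⟩ <;> refine dotProduct_nonpos_of_mem_interior_convexHull ?_ hv <;>
      simp [delta2Vertices, dotProduct, Fin.sum_univ_four] <;> norm_num
  simp only [dotProduct, Fin.sum_univ_four, cons_val_zero, cons_val_one, cons_val] at h₁ h₂ h₃ h₄ h₅
  ext i
  fin_cases i <;> simp only [Fin.zero_eta, Fin.mk_one, Fin.reduceFinMk, Pi.zero_apply] <;> omega

theorem zero_mem_interior_delta2 : (0 : Fin 4 → ℝ) ∈ interior (convexHull ℝ delta2Vertices) := by
  -- `(2 v₂ + 3 v₃ + 2 v₆) / 7`, where `vₖ` is the `k`-th listed vertex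
  have hp : ![-2/7, -2/7, -1/7, -2/7] ∈ convexHull ℝ delta2Vertices := by
    have hcomb := (convex_convexHull ℝ delta2Vertices).sum_mem (t := Finset.univ)
      (w := ![2/7, 3/7, 2/7]) (z := ![![4,-2,-1,-2], ![-2,2,-1,0], ![-2,-2,2,1]])
      (by simp [Fin.forall_fin_succ]; norm_num) (by simp [Fin.sum_univ_three]; norm_num)
      (fun i _ => subset_convexHull ℝ _ (by fin_cases i <;> simp [delta2Vertices]))
    convert hcomb using 1
    ext j
    fin_cases j <;> simp [Fin.sum_univ_three] <;> norm_num
  exact zero_mem_interior_convexHull_of_forall_neg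
    (fun i => by fin_cases i <;> simp [delta2Vertices, funext_iff, Fin.forall_fin_succ]) hp
    (fun i => by fin_cases i <;> norm_num)

/-- The polytope `Δ₂ ⊂ ℝ⁴`, the convex hull of the columns `(0,0,1,0)`, `(4,-2,-1,-2)`,
`(-2,2,-1,0)`, `(0,0,0,1)`, `(0,1,0,0)`, `(-2,-2,2,1)`, `(1,0,0,0)`, has exactly one
interior lattice point, namely the origin. -/
theorem delta2_unique_interior_lattice_point :
    {v : Fin 4 → ℤ | (fun i => (v i : ℝ)) ∈ interior (convexHull ℝ
      ({![0,0,1,0], ![4,-2,-1,-2], ![-2,2,-1,0], ![0,0,0,1],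
        ![0,1,0,0], ![-2,-2,2,1], ![1,0,0,0]} : Set (Fin 4 → ℝ)))} = {0} := by
  ext v
  refine ⟨eq_zero_of_mem_interior_delta2, ?_⟩
  rintro rfl
  simpa [Pi.zero_def, delta2Vertices] using zero_mem_interior_delta2
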